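/- arXiv:2509.00525 — 2 statements merged into one kernel-verified Lean document; each statement's English description precedes it below -/
import Mathlib

section
/- Let F : N1 → N2 be a local diffeomorphism between smooth connected manifolds. Then F has the path-lifting property (every continuous piecewise-smooth path α : [0,1] → N2 with a chosen preimage x0 of α(0) admits a continuous lift ᾱ : [0,1] → N1 with ᾱ(0) = x0 and F ∘ ᾱ = α) if and only if F has the path-continuation property (every partial lift defined on [0,b) has a sequence of parameters tending to b along which it converges in N1). -/
open Set Filter Topology
open scoped Manifold

/-- A path `α : ℝ → M` is a path in the sense of the paper on `[0,1]`: continuous and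
piecewise smooth, i.e. smooth on each interval of some partition `0 = t₀ < ⋯ < tₙ = 1`. -/
def PiecewiseSmoothOn {E : Type*} [NormedAddCommGroup E] [NormedSpace ℝ E]
    {H : Type*} [TopologicalSpace H] (I : ModelWithCorners ℝ E H)
    {M : Type*} [TopologicalSpace M] [ChartedSpace H M]
    (γ : ℝ → M) : Prop :=
  ContinuousOn γ (Icc 0 1) ∧
    ∃ (n : ℕ) (t : Fin (n + 1) → ℝ), StrictMono t ∧ t 0 = 0 ∧ t (Fin.last n) = 1 ∧
      ∀ i : Fin n, ContMDiffOn 𝓘(ℝ, ℝ) I (⊤ : ℕ∞) γ (Icc (t i.castSucc) (t i.succ))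

/-!
Lifts through a local homeomorphism of Hausdorff spaces are unique on connected parameter sets,
and a local inverse around a point over `α t₀` turns a lift that comes close to that point into a
lift on a neighbourhood of `t₀`. Given the continuation property, let `c` be the supremum of the
times up to which `α` lifts from `x₀`: by uniqueness the lifts on `[0, b]`, `b < c`, glue to a
lift on `[0, c)`; its limit point along the given sequence lies over `α c`, and the local inverse
there extends the lift to `[0, c]` and beyond unless `c = 1`. Conversely, a partial lift on
`[0, b)` is by uniqueness the restriction of the full lift with the same starting point, so it
converges to the value of that lift at `b`.
-/

section Lifts

variable {A X Y : Type*} [TopologicalSpace A] [TopologicalSpace X] {f : X → Y}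

def IsLiftOn (f : X → Y) (α : A → Y) (γ : A → X) (s : Set A) : Prop :=
  ContinuousOn γ s ∧ ∀ t ∈ s, f (γ t) = α t

variable {α : A → Y} {γ γ' γ₁ γ₂ : A → X} {s s' : Set A}

namespace IsLiftOn

theorem mono (h : IsLiftOn f α γ s) (hs : s' ⊆ s) : IsLiftOn f α γ s' :=
  ⟨h.1.mono hs, fun t ht => h.2 t (hs ht)⟩

theorem congr (h : IsLiftOn f α γ s) (h' : EqOn γ' γ s) : IsLiftOn f α γ' s :=
  ⟨h.1.congr h', fun t ht => (h' ht).symm ▸ h.2 t ht⟩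

theorem union_of_isClosed (h : IsLiftOn f α γ s) (h' : IsLiftOn f α γ s') (hs : IsClosed s)
    (hs' : IsClosed s') : IsLiftOn f α γ (s ∪ s') :=
  ⟨h.1.union_of_isClosed h'.1 hs hs', fun t ht => ht.elim (h.2 t) (h'.2 t)⟩

end IsLiftOn

variable [TopologicalSpace Y]

theorem IsLiftOn.eqOn [T2Space X] (hf : IsLocalHomeomorph f) (hs : IsPreconnected s)
    (h₁ : IsLiftOn f α γ₁ s) (h₂ : IsLiftOn f α γ₂ s) {a : A} (ha : a ∈ s) (h : γ₁ a = γ₂ a) :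
    EqOn γ₁ γ₂ s :=
  (T2Space.isSeparatedMap f).eqOn_of_comp_eqOn hf.isLocallyInjective hs h₁.1 h₂.1
    (fun t ht => (h₁.2 t ht).trans (h₂.2 t ht).symm) ha h

theorem IsLocalHomeomorph.exists_isLiftOn_nhdsWithin (hf : IsLocalHomeomorph f) {t₀ : A}
    {x : X} (hα : ContinuousOn α s) (ht₀ : t₀ ∈ s) (hx : f x = α t₀) :
    ∃ U ∈ 𝓝 x, ∃ V ∈ 𝓝[s] t₀, ∃ β : A → X,
      IsLiftOn f α β V ∧ ∀ t ∈ V, ∀ y ∈ U, f y = α t → β t = y := by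
  obtain ⟨e, hxe, rfl⟩ := hf x
  have hV : α ⁻¹' e.target ∈ 𝓝[s] t₀ :=
    (hα t₀ ht₀).preimage_mem_nhdsWithin (e.open_target.mem_nhds (hx ▸ e.map_source hxe))
  refine ⟨e.source, e.open_source.mem_nhds hxe, s ∩ α ⁻¹' e.target,
    inter_mem self_mem_nhdsWithin hV, e.symm ∘ α, ⟨?_, fun t ht => e.right_inv ht.2⟩, ?_⟩
  · exact e.continuousOn_symm.comp (hα.mono inter_subset_left) fun t ht => ht.2
  · rintro t - y hy hyt
    rw [Function.comp_apply, ← hyt, e.left_inv hy]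

end Lifts

section PathLifting

variable {X Y : Type*} [TopologicalSpace X] {f : X → Y} {α : ℝ → Y} {γ β : ℝ → X} {a b c : ℝ}

def HasPathLifting (f : X → Y) (α : ℝ → Y) : Prop :=
  ∀ x₀ : X, f x₀ = α 0 →
    ∃ γ : ℝ → X, ContinuousOn γ (Icc 0 1) ∧ γ 0 = x₀ ∧ ∀ t ∈ Icc (0 : ℝ) 1, f (γ t) = α t

def HasPathContinuation (f : X → Y) (α : ℝ → Y) : Prop :=
  ∀ b : ℝ, 0 < b → b ≤ 1 → ∀ γ : ℝ → X, ContinuousOn γ (Ico 0 b) →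
    (∀ t ∈ Ico (0 : ℝ) b, f (γ t) = α t) →
    ∃ (u : ℕ → ℝ) (x : X), (∀ k, u k ∈ Ico (0 : ℝ) b) ∧ Tendsto u atTop (𝓝 b) ∧
      Tendsto (fun k => γ (u k)) atTop (𝓝 x)

theorem IsLiftOn.piecewise_Icc (hγ : IsLiftOn f α γ (Icc a b)) (hβ : IsLiftOn f α β (Icc b c))
    (hb : γ b = β b) (hab : a ≤ b) (hbc : b ≤ c) :
    IsLiftOn f α (fun t => if t ≤ b then γ t else β t) (Icc a c) := by
  have left : EqOn (fun t => if t ≤ b then γ t else β t) γ (Icc a b) := fun t ht => if_pos ht.2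
  have right : EqOn (fun t => if t ≤ b then γ t else β t) β (Icc b c) := fun t ht => by
    rcases ht.1.eq_or_lt with rfl | hlt
    · exact (if_pos le_rfl).trans hb
    · exact if_neg hlt.not_ge
  rw [← Icc_union_Icc_eq_Icc hab hbc]
  exact (hγ.congr left).union_of_isClosed (hβ.congr right) isClosed_Icc isClosed_Icc

variable [TopologicalSpace Y]

namespace IsLiftOn

theorem exists_extend_right (hγ : IsLiftOn f α γ (Icc a b)) (hf : IsLocalHomeomorph f)
    (hα : ContinuousOn α (Icc a c)) (hab : a ≤ b) (hbc : b < c) :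
    ∃ b' ∈ Ioc b c, ∃ γ' : ℝ → X, IsLiftOn f α γ' (Icc a b') ∧ γ' a = γ a := by
  have hγb : f (γ b) = α b := hγ.2 b ⟨hab, le_rfl⟩
  obtain ⟨U, hU, V, hV, β, hβ, hβ_eq⟩ := hf.exists_isLiftOn_nhdsWithin hα ⟨hab, hbc.le⟩ hγb
  have hV' : V ∩ Icc a c ∈ 𝓝[≥] b :=
    nhdsWithin_le_of_mem (Icc_mem_nhdsGE_of_mem ⟨hab, hbc⟩) (inter_mem hV self_mem_nhdsWithin)
  obtain ⟨b', hbb', hsub⟩ := mem_nhdsGE_iff_exists_Icc_subset.1 hV'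
  have hjoin : γ b = β b :=
    (hβ_eq b (hsub (left_mem_Icc.2 hbb'.le)).1 (γ b) (mem_of_mem_nhds hU) hγb).symm
  exact ⟨b', ⟨hbb', (hsub (right_mem_Icc.2 hbb'.le)).2.2⟩, _,
    hγ.piecewise_Icc (hβ.mono fun t ht => (hsub ht).1) hjoin hab hbb'.le, if_pos hab⟩

theorem exists_extend_of_tendsto [T2Space Y] (hγ : IsLiftOn f α γ (Ico a c))
    (hf : IsLocalHomeomorph f) (hα : ContinuousOn α (Icc a c)) {u : ℕ → ℝ} {x : X}
    (hu : ∀ k, u k ∈ Ico a c) (huc : Tendsto u atTop (𝓝 c)) (hγu : Tendsto (γ ∘ u) atTop (𝓝 x)) :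
    ∃ γ' : ℝ → X, IsLiftOn f α γ' (Icc a c) ∧ γ' a = γ a := by
  have hac : a < c := (hu 0).1.trans_lt (hu 0).2
  have huc' : Tendsto u atTop (𝓝[Icc a c] c) :=
    tendsto_nhdsWithin_iff.2 ⟨huc, .of_forall fun k => Ico_subset_Icc_self (hu k)⟩
  have hx : f x = α c :=
    tendsto_nhds_unique ((hf.continuous.tendsto x).comp hγu)
      (((hα c (right_mem_Icc.2 hac.le)).tendsto.comp huc').congr fun k => (hγ.2 _ (hu k)).symm)
  obtain ⟨U, hU, V, hV, β, hβ, hβ_eq⟩ :=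
    hf.exists_isLiftOn_nhdsWithin hα (right_mem_Icc.2 hac.le) hx
  rw [nhdsWithin_Icc_eq_nhdsLE hac] at hV
  obtain ⟨l, hlc, hlV⟩ := mem_nhdsLE_iff_exists_Icc_subset.1 hV
  obtain ⟨k, hlk, hkU⟩ :=
    ((huc.eventually (eventually_gt_nhds hlc)).and (hγu.eventually hU)).exists
  have hjoin : γ (u k) = β (u k) :=
    (hβ_eq _ (hlV ⟨hlk.le, (hu k).2.le⟩) _ hkU (hγ.2 _ (hu k))).symm
  exact ⟨_, (hγ.mono (Icc_subset_Ico_right (hu k).2)).piecewise_Icc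
    (hβ.mono ((Icc_subset_Icc_left hlk.le).trans hlV)) hjoin (hu k).1 (hu k).2.le,
    if_pos (hu k).1⟩

theorem exists_seq_tendsto_of_isLiftOn_Icc [T2Space X] (hγ : IsLiftOn f α γ (Ico a b))
    (hf : IsLocalHomeomorph f) (hβ : IsLiftOn f α β (Icc a b)) (hab : a < b) (h : γ a = β a) :
    ∃ (u : ℕ → ℝ) (x : X), (∀ k, u k ∈ Ico a b) ∧ Tendsto u atTop (𝓝 b) ∧
      Tendsto (γ ∘ u) atTop (𝓝 x) := by
  have heq : EqOn γ β (Ico a b) :=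
    hγ.eqOn hf isPreconnected_Ico (hβ.mono Ico_subset_Icc_self) (left_mem_Ico.2 hab) h
  obtain ⟨u, -, hu, huc⟩ := exists_seq_strictMono_tendsto' hab
  have huc' : Tendsto u atTop (𝓝[Icc a b] b) :=
    tendsto_nhdsWithin_iff.2 ⟨huc, .of_forall fun k => Ioo_subset_Icc_self (hu k)⟩
  refine ⟨u, β b, fun k => Ioo_subset_Ico_self (hu k), huc, ?_⟩
  exact ((hβ.1 b (right_mem_Icc.2 hab.le)).tendsto.comp huc').congr
    fun k => (heq (Ioo_subset_Ico_self (hu k))).symm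

end IsLiftOn

namespace IsLocalHomeomorph

theorem exists_isLiftOn_Ico [T2Space X] (hf : IsLocalHomeomorph f) (hac : a < c) {x₀ : X}
    (h : ∀ b ∈ Ico a c, ∃ γ : ℝ → X, IsLiftOn f α γ (Icc a b) ∧ γ a = x₀) :
    ∃ γ : ℝ → X, IsLiftOn f α γ (Ico a c) ∧ γ a = x₀ := by
  have : Nonempty X := ⟨x₀⟩
  choose! L hL hLa using h
  have compat : ∀ b ∈ Ico a c, ∀ b' ∈ Ico a c, EqOn (L b) (L b') (Icc a (min b b')) :=
    fun b hb b' hb' => ((hL b hb).mono (Icc_subset_Icc_right (min_le_left _ _))).eqOn hf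
      isPreconnected_Icc ((hL b' hb').mono (Icc_subset_Icc_right (min_le_right _ _)))
      (left_mem_Icc.2 (le_min hb.1 hb'.1)) ((hLa b hb).trans (hLa b' hb').symm)
  -- reading the lift at `t` off `[a, (t + c) / 2]` leaves room to the right of `t`
  have hmid : ∀ t ∈ Ico a c, (t + c) / 2 ∈ Ico a c ∧ t < (t + c) / 2 := fun t ht =>
    ⟨⟨by linarith [ht.1, ht.2], by linarith [ht.2]⟩, by linarith [ht.2]⟩
  set γ : ℝ → X := fun t => L ((t + c) / 2) t
  have hγF : ∀ t ∈ Ico a c, f (γ t) = α t := fun t ht =>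
    (hL _ (hmid t ht).1).2 t ⟨ht.1, (hmid t ht).2.le⟩
  have hγc : ContinuousOn γ (Ico a c) := by
    refine continuousOn_of_locally_continuousOn fun t ht =>
      ⟨Iio ((t + c) / 2), isOpen_Iio, (hmid t ht).2, ?_⟩
    refine ((hL _ (hmid t ht).1).1.mono fun s hs => ⟨hs.1.1, hs.2.le⟩).congr fun s hs => ?_
    exact compat _ (hmid s hs.1).1 _ (hmid t ht).1 ⟨hs.1.1, le_min (hmid s hs.1).2.le hs.2.le⟩
  exact ⟨γ, ⟨hγc, hγF⟩, hLa _ (hmid a ⟨le_rfl, hac⟩).1⟩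

theorem hasPathLifting_of_hasPathContinuation [T2Space X] [T2Space Y] (hf : IsLocalHomeomorph f)
    (hα : ContinuousOn α (Icc 0 1)) (hcont : HasPathContinuation f α) : HasPathLifting f α := by
  intro x₀ hx₀
  set S : Set ℝ := {b ∈ Icc 0 1 | ∃ γ : ℝ → X, IsLiftOn f α γ (Icc 0 b) ∧ γ 0 = x₀}
  have h0S : 0 ∈ S := ⟨left_mem_Icc.2 zero_le_one, fun _ => x₀,
    ⟨continuousOn_const, fun t ht => by
      rw [Icc_self, mem_singleton_iff] at ht
      subst ht
      exact hx₀⟩, rfl⟩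
  have hext : ∀ b ∈ S, b < 1 → ∃ b' ∈ S, b < b' := by
    rintro b ⟨hb, γ, hγ, hγ0⟩ hb1
    obtain ⟨b', hbb', γ', hγ', hγ'0⟩ := hγ.exists_extend_right hf hα hb.1 hb1
    exact ⟨b', ⟨⟨hb.1.trans hbb'.1.le, hbb'.2⟩, γ', hγ', hγ'0.trans hγ0⟩, hbb'.1⟩
  have hbdd : BddAbove S := ⟨1, fun b hb => hb.1.2⟩
  set c := sSup S
  have hc1 : c ≤ 1 := csSup_le ⟨0, h0S⟩ fun b hb => hb.1.2
  have hc0 : 0 < c := by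
    obtain ⟨b, hb, hb0⟩ := hext 0 h0S one_pos
    exact hb0.trans_le (le_csSup hbdd hb)
  have hbelow : ∀ b ∈ Ico 0 c, ∃ γ : ℝ → X, IsLiftOn f α γ (Icc 0 b) ∧ γ 0 = x₀ := by
    rintro b ⟨-, hbc⟩
    obtain ⟨r, ⟨-, γ, hγ, hγ0⟩, hbr⟩ := exists_lt_of_lt_csSup ⟨0, h0S⟩ hbc
    exact ⟨γ, hγ.mono (Icc_subset_Icc_right hbr.le), hγ0⟩
  obtain ⟨γ, hγ, hγ0⟩ := hf.exists_isLiftOn_Ico hc0 hbelow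
  obtain ⟨u, x, hu, huc, hγu⟩ := hcont c hc0 hc1 γ hγ.1 hγ.2
  obtain ⟨γ', hγ', hγ'0⟩ :=
    hγ.exists_extend_of_tendsto hf (hα.mono (Icc_subset_Icc_right hc1)) hu huc hγu
  have hcS : c ∈ S := ⟨⟨hc0.le, hc1⟩, γ', hγ', hγ'0.trans hγ0⟩
  have hc : c = 1 := hc1.eq_or_lt.resolve_right fun h =>
    let ⟨_, hb', hcb'⟩ := hext c hcS h
    (le_csSup hbdd hb').not_gt hcb'
  rw [hc] at hcS
  obtain ⟨-, γ'', ⟨hγ''c, hγ''F⟩, hγ''0⟩ := hcS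
  exact ⟨γ'', hγ''c, hγ''0, hγ''F⟩

theorem hasPathLifting_iff_hasPathContinuation [T2Space X] [T2Space Y] (hf : IsLocalHomeomorph f)
    (hα : ContinuousOn α (Icc 0 1)) : HasPathLifting f α ↔ HasPathContinuation f α := by
  refine ⟨fun hlift b hb0 hb1 γ hγc hγF => ?_, hf.hasPathLifting_of_hasPathContinuation hα⟩
  obtain ⟨β, hβc, hβ0, hβF⟩ := hlift (γ 0) (hγF 0 (left_mem_Ico.2 hb0))
  have hβ : IsLiftOn f α β (Icc 0 b) := (show IsLiftOn f α β (Icc 0 1) from ⟨hβc, hβF⟩).mono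
    (Icc_subset_Icc_right hb1)
  exact IsLiftOn.exists_seq_tendsto_of_isLiftOn_Icc ⟨hγc, hγF⟩ hf hβ hb0 hβ0.symm

end IsLocalHomeomorph

end PathLifting

theorem localDiffeo_pathLifting_iff_pathContinuation_general
    {E₁ : Type*} [NormedAddCommGroup E₁] [NormedSpace ℝ E₁]
    {H₁ : Type*} [TopologicalSpace H₁] (I₁ : ModelWithCorners ℝ E₁ H₁)
    {N₁ : Type*} [TopologicalSpace N₁] [ChartedSpace H₁ N₁]
    {E₂ : Type*} [NormedAddCommGroup E₂] [NormedSpace ℝ E₂]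
    {H₂ : Type*} [TopologicalSpace H₂] (I₂ : ModelWithCorners ℝ E₂ H₂)
    {N₂ : Type*} [TopologicalSpace N₂] [ChartedSpace H₂ N₂]
    [T2Space N₁] [T2Space N₂]
    (F : N₁ → N₂) (hF : IsLocalDiffeomorph I₁ I₂ (⊤ : ℕ∞) F) :
    -- path-lifting property
    (∀ α : ℝ → N₂, PiecewiseSmoothOn I₂ α →
      ∀ x₀ : N₁, F x₀ = α 0 →
        ∃ ᾱ : ℝ → N₁, ContinuousOn ᾱ (Icc 0 1) ∧ ᾱ 0 = x₀ ∧
          ∀ t ∈ Icc (0 : ℝ) 1, F (ᾱ t) = α t)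
    ↔
    -- path-continuation property
    (∀ α : ℝ → N₂, PiecewiseSmoothOn I₂ α →
      ∀ b : ℝ, 0 < b → b ≤ 1 →
        ∀ ᾱ : ℝ → N₁, ContinuousOn ᾱ (Ico 0 b) →
          (∀ t ∈ Ico (0 : ℝ) b, F (ᾱ t) = α t) →
          ∃ (u : ℕ → ℝ) (x : N₁), (∀ k, u k ∈ Ico (0 : ℝ) b) ∧
            Tendsto u atTop (𝓝 b) ∧ Tendsto (fun k => ᾱ (u k)) atTop (𝓝 x)) := by
  exact forall_congr' fun α => forall_congr' fun hα =>
    hF.isLocalHomeomorph.hasPathLifting_iff_hasPathContinuation hα.1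

/-- **Rheinboldt.** A local diffeomorphism `F : N₁ → N₂` between smooth
connected manifolds has the path-lifting property if and only if it has the
path-continuation property. -/
theorem localDiffeo_pathLifting_iff_pathContinuation
    {E₁ : Type*} [NormedAddCommGroup E₁] [NormedSpace ℝ E₁]
    {H₁ : Type*} [TopologicalSpace H₁] (I₁ : ModelWithCorners ℝ E₁ H₁)
    {N₁ : Type*} [TopologicalSpace N₁] [ChartedSpace H₁ N₁] [IsManifold I₁ (⊤ : ℕ∞) N₁]
    {E₂ : Type*} [NormedAddCommGroup E₂] [NormedSpace ℝ E₂]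
    {H₂ : Type*} [TopologicalSpace H₂] (I₂ : ModelWithCorners ℝ E₂ H₂)
    {N₂ : Type*} [TopologicalSpace N₂] [ChartedSpace H₂ N₂] [IsManifold I₂ (⊤ : ℕ∞) N₂]
    [ConnectedSpace N₁] [ConnectedSpace N₂] [T2Space N₁] [T2Space N₂]
    (F : N₁ → N₂) (hF : IsLocalDiffeomorph I₁ I₂ (⊤ : ℕ∞) F) :
    -- path-lifting property
    (∀ α : ℝ → N₂, PiecewiseSmoothOn I₂ α →
      ∀ x₀ : N₁, F x₀ = α 0 →
        ∃ ᾱ : ℝ → N₁, ContinuousOn ᾱ (Icc 0 1) ∧ ᾱ 0 = x₀ ∧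
          ∀ t ∈ Icc (0 : ℝ) 1, F (ᾱ t) = α t)
    ↔
    -- path-continuation property
    (∀ α : ℝ → N₂, PiecewiseSmoothOn I₂ α →
      ∀ b : ℝ, 0 < b → b ≤ 1 →
        ∀ ᾱ : ℝ → N₁, ContinuousOn ᾱ (Ico 0 b) →
          (∀ t ∈ Ico (0 : ℝ) b, F (ᾱ t) = α t) →
          ∃ (u : ℕ → ℝ) (x : N₁), (∀ k, u k ∈ Ico (0 : ℝ) b) ∧
            Tendsto u atTop (𝓝 b) ∧ Tendsto (fun k => ᾱ (u k)) atTop (𝓝 x)) :=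
  localDiffeo_pathLifting_iff_pathContinuation_general I₁ I₂ F hF
end

section
/- Let (M,g) be a connected semi-Riemannian manifold, p, q ∈ M, and suppose exp_p : D ⊂ T_pM → M is surjective via quasi-lifts: for every piecewise smooth curve γ : [0,1] → M from p to q there exists v ∈ D with exp_p(v) = q such that the geodesic t ↦ exp_p(tv) is fixed-endpoint homotopic to γ. In particular, since D is star-shaped around the origin (hence simply connected), the connecting geodesic lies in the same fixed-endpoint homotopy class as γ. -/
/-!
The quasi-lift `σ`, rescaled to `[0,1]`, and the ray `t ↦ t • σ c` are two paths in `D` from `0`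
to `σ c`. A star-shaped set is contractible, hence simply connected, so they are homotopic in `D`,
and pushing forward by `E` makes the geodesic homotopic to `E ∘ σ`. By the lift equation,
`E ∘ σ` is `γ ∘ χ`, a reparametrization of `γ` (monotonicity and surjectivity of `χ` force
`χ 0 = 0` and `χ c = 1`), and a reparametrization is homotopic to the path itself.
-/

open Set

section

open scoped unitInterval

theorem MonotoneOn.apply_left_eq_of_image_Icc_eq_Icc {f : ℝ → ℝ} {a b a' b' : ℝ}
    (hf : MonotoneOn f (Icc a b)) (hab : a ≤ b) (ha'b' : a' ≤ b')
    (himage : f '' Icc a b = Icc a' b') : f a = a' :=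
  (himage ▸ hf.map_isLeast (isLeast_Icc hab)).unique (isLeast_Icc ha'b')

theorem MonotoneOn.apply_right_eq_of_image_Icc_eq_Icc {f : ℝ → ℝ} {a b a' b' : ℝ}
    (hf : MonotoneOn f (Icc a b)) (hab : a ≤ b) (ha'b' : a' ≤ b')
    (himage : f '' Icc a b = Icc a' b') : f b = b' :=
  (himage ▸ hf.map_isGreatest (isGreatest_Icc hab)).unique (isGreatest_Icc ha'b')

theorem mapsTo_const_mul_unitInterval {c : ℝ} (hc : 0 ≤ c) : MapsTo (c * ·) I (Icc 0 c) :=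
  fun _ ht => ⟨mul_nonneg hc ht.1, mul_le_of_le_one_right hc ht.2⟩

theorem ContinuousOn.comp_const_mul_unitInterval {X : Type*} [TopologicalSpace X] {f : ℝ → X}
    {c : ℝ} (hf : ContinuousOn f (Icc 0 c)) (hc : 0 ≤ c) : ContinuousOn (fun t => f (c * t)) I :=
  hf.comp (continuousOn_const.mul continuousOn_id) (mapsTo_const_mul_unitInterval hc)

namespace Path

variable {X : Type*} [TopologicalSpace X]

def ofLineMapsTo {s : Set X} {x y : s} {f : ℝ → X} (hf : ContinuousOn f I) (hs : MapsTo f I s)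
    (h₀ : f 0 = x) (h₁ : f 1 = y) : Path x y where
  toFun := hs.restrict f I s
  continuous_toFun := hf.mapsToRestrict hs
  source' := Subtype.ext h₀
  target' := Subtype.ext h₁

theorem homotopic_of_forall_eq_comp {x y : X} {p q : Path x y} (g : I → I) (hg : Continuous g)
    (hg₀ : g 0 = 0) (hg₁ : g 1 = 1) (h : ∀ t, p t = q (g t)) : p.Homotopic q := by
  obtain rfl : p = q.reparam g hg hg₀ hg₁ := Path.ext (funext h)
  exact ⟨(Homotopy.reparam q g hg hg₀ hg₁).symm⟩

theorem Homotopic.exists_continuousOn_Icc {x y : X} {p q : Path x y} (h : p.Homotopic q) :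
    ∃ H : ℝ → ℝ → X,
      ContinuousOn (fun z : ℝ × ℝ => H z.1 z.2) (I ×ˢ I) ∧
        (∀ t (ht : t ∈ I), H 0 t = p ⟨t, ht⟩) ∧
        (∀ t (ht : t ∈ I), H 1 t = q ⟨t, ht⟩) ∧
        (∀ s ∈ I, H s 0 = x ∧ H s 1 = y) := by
  obtain ⟨F⟩ := h
  refine ⟨fun s t => F (projIcc 0 1 zero_le_one s, projIcc 0 1 zero_le_one t),
    (F.continuous.comp (continuous_projIcc.prodMap continuous_projIcc)).continuousOn,
    fun t ht => ?_, fun t ht => ?_, fun s _ => ⟨?_, ?_⟩⟩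
  all_goals simp [projIcc_of_mem zero_le_one, *]

end Path

end

theorem geodesic_in_homotopy_class_of_quasiLift_general
    {V : Type*} [NormedAddCommGroup V] [NormedSpace ℝ V]
    {M : Type*} [TopologicalSpace M]
    (p q : M) (D : Set V) (h0D : (0 : V) ∈ D)
    (hstar : ∀ v ∈ D, ∀ t ∈ Icc (0 : ℝ) 1, t • v ∈ D)
    (E : V → M) (hE : ContinuousOn E D) (hEp : E 0 = p)
    (γ : ℝ → M) (hγ : ContinuousOn γ (Icc 0 1)) (hγ0 : γ 0 = p) (hγ1 : γ 1 = q)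
    -- a quasi-lift of `γ` through `E` starting at the origin
    (c : ℝ) (σ : ℝ → V) (χ : ℝ → ℝ)
    (hσ : ContinuousOn σ (Icc 0 c)) (hσ0 : σ 0 = 0)
    (hσD : ∀ t ∈ Icc (0 : ℝ) c, σ t ∈ D)
    (hχ : ContinuousOn χ (Icc 0 c)) (hχmono : MonotoneOn χ (Icc 0 c))
    (hχsurj : χ '' Icc 0 c = Icc 0 1)
    (hlift : ∀ t ∈ Icc (0 : ℝ) c, E (σ t) = γ (χ t)) :
    E (σ c) = q ∧
      -- the geodesic `t ↦ E (t • σ c)` is fixed-endpoint homotopic to `γ`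
      ∃ Hmap : ℝ → ℝ → M,
        ContinuousOn (fun z : ℝ × ℝ => Hmap z.1 z.2) (Icc 0 1 ×ˢ Icc 0 1) ∧
        (∀ t ∈ Icc (0 : ℝ) 1, Hmap 0 t = E (t • σ c)) ∧
        (∀ t ∈ Icc (0 : ℝ) 1, Hmap 1 t = γ t) ∧
        (∀ s ∈ Icc (0 : ℝ) 1, Hmap s 0 = p ∧ Hmap s 1 = q) := by
  have hc : 0 ≤ c := nonempty_Icc.1 <| image_nonempty.1 <| hχsurj ▸ nonempty_Icc.2 zero_le_one
  have hχ0 := hχmono.apply_left_eq_of_image_Icc_eq_Icc hc zero_le_one hχsurj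
  have hχc := hχmono.apply_right_eq_of_image_Icc_eq_Icc hc zero_le_one hχsurj
  have hq : E (σ c) = q := by rw [hlift c ⟨hc, le_rfl⟩, hχc, hγ1]
  have hv : σ c ∈ D := hσD c ⟨hc, le_rfl⟩
  have : ContractibleSpace D := (starConvex_zero_iff.2 fun v hv a ha₀ ha₁ =>
    hstar v hv a ⟨ha₀, ha₁⟩).contractibleSpace ⟨0, h0D⟩
  let E' : C(D, M) := ⟨D.domRestrict E, hE.domRestrict⟩
  let ray : Path (⟨0, h0D⟩ : D) ⟨σ c, hv⟩ := Path.ofLineMapsTo (f := (· • σ c))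
    (by fun_prop) (fun t ht => hstar _ hv t ht) (zero_smul ℝ _) (one_smul ℝ _)
  let lift : Path (⟨0, h0D⟩ : D) ⟨σ c, hv⟩ :=
    Path.ofLineMapsTo (hσ.comp_const_mul_unitInterval hc)
      (fun t ht => hσD _ (mapsTo_const_mul_unitInterval hc ht)) (by simp [hσ0]) (by simp)
  have hreparam : (lift.map E'.continuous).Homotopic
      (Path.ofLine hγ (hγ0.trans hEp.symm) (hγ1.trans hq.symm)) :=
    Path.homotopic_of_forall_eq_comp
      (MapsTo.restrict (fun t => χ (c * t)) unitInterval unitInterval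
        ((hχsurj ▸ mapsTo_image χ _).comp (mapsTo_const_mul_unitInterval hc)))
      ((hχ.comp_const_mul_unitInterval hc).mapsToRestrict _)
      (Subtype.ext <| show χ (c * 0) = 0 by rw [mul_zero, hχ0])
      (Subtype.ext <| show χ (c * 1) = 1 by rw [mul_one, hχc])
      fun t => hlift _ (mapsTo_const_mul_unitInterval hc t.2)
  obtain ⟨H, hH, hH0, hH1, hHends⟩ :=
    ((SimplyConnectedSpace.paths_homotopic ray lift).map E' |>.trans hreparam)
      |>.exists_continuousOn_Icc
  exact ⟨hq, H, hH, hH0, hH1, fun s hs => ⟨(hHends s hs).1.trans hEp, (hHends s hs).2.trans hq⟩⟩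

/-- Let `exp_p : D ⊂ T_pM → M` be the exponential map (abstracted as a
continuous map `E` on an open star-shaped domain `D ∋ 0` with `E 0 = p`).  If a piecewise
smooth (here: continuous) curve `γ : [0,1] → M` from `p` to `q` admits a quasi-lift
`σ : [0,c] → D` through `E` starting at the origin, then its endpoint `v = σ c` satisfies
`E v = q` and — since `D` is star-shaped around the origin, hence simply connected — the
connecting geodesic `t ↦ E (t • v)` is fixed-endpoint homotopic to `γ`. -/
theorem geodesic_in_homotopy_class_of_quasiLift
    {V : Type*} [NormedAddCommGroup V] [NormedSpace ℝ V] [FiniteDimensional ℝ V]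
    {M : Type*} [TopologicalSpace M] [T2Space M]
    (p q : M) (D : Set V) (hD : IsOpen D) (h0D : (0 : V) ∈ D)
    (hstar : ∀ v ∈ D, ∀ t ∈ Icc (0 : ℝ) 1, t • v ∈ D)
    (E : V → M) (hE : ContinuousOn E D) (hEp : E 0 = p)
    (γ : ℝ → M) (hγ : ContinuousOn γ (Icc 0 1)) (hγ0 : γ 0 = p) (hγ1 : γ 1 = q)
    -- a quasi-lift of `γ` through `E` starting at the origin
    (c : ℝ) (hc : 0 < c) (σ : ℝ → V) (χ : ℝ → ℝ)
    (hσ : ContinuousOn σ (Icc 0 c)) (hσ0 : σ 0 = 0)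
    (hσD : ∀ t ∈ Icc (0 : ℝ) c, σ t ∈ D)
    (hχ : ContinuousOn χ (Icc 0 c)) (hχmono : MonotoneOn χ (Icc 0 c))
    (hχsurj : χ '' Icc 0 c = Icc 0 1)
    (hlift : ∀ t ∈ Icc (0 : ℝ) c, E (σ t) = γ (χ t)) :
    E (σ c) = q ∧
      -- the geodesic `t ↦ E (t • σ c)` is fixed-endpoint homotopic to `γ`
      ∃ Hmap : ℝ → ℝ → M,
        ContinuousOn (fun z : ℝ × ℝ => Hmap z.1 z.2) (Icc 0 1 ×ˢ Icc 0 1) ∧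
        (∀ t ∈ Icc (0 : ℝ) 1, Hmap 0 t = E (t • σ c)) ∧
        (∀ t ∈ Icc (0 : ℝ) 1, Hmap 1 t = γ t) ∧
        (∀ s ∈ Icc (0 : ℝ) 1, Hmap s 0 = p ∧ Hmap s 1 = q) :=
  geodesic_in_homotopy_class_of_quasiLift_general p q D h0D hstar E hE hEp γ hγ hγ0 hγ1 c σ χ hσ hσ0
    hσD hχ hχmono hχsurj hlift
end
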